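/- arXiv:2402.08813 — 2 statements merged into one kernel-verified Lean document; each statement's English description precedes it below -/
import Mathlib

section
/- Value-error bound via optimality operators: Let T⋆ and T̂⋆ be the Bellman optimality operators of two finite MDPs with fixed points V⋆ and V̂⋆ respectively, where (T⋆ v)(s) = min_a [c(s,a) + γ ∑_{s'} v(s') P(s'|s,a)] and similarly for T̂⋆. Suppose every deterministic stationary policy π of either model satisfies the drift condition ∑_{s'} w(s') P_π(s'|s) ≤ κ w(s) (and similarly for P̂) with γκ < 1. Then ‖V⋆ − V̂⋆‖_w ≤ (1/(1−γκ)) ‖T⋆ V̂⋆ − T̂⋆ V̂⋆‖_w. -/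
private lemma inf_abs_le' {A : Type*} [Fintype A] [Nonempty A] (f g : A → ℝ) (B : ℝ)
    (h : ∀ a, |f a - g a| ≤ B) : |(⨅ a, f a) - (⨅ a, g a)| ≤ B := by
  have bddf : BddBelow (Set.range f) := (Set.finite_range f).bddBelow
  have bddg : BddBelow (Set.range g) := (Set.finite_range g).bddBelow
  rw [abs_sub_le_iff]
  constructor
  · have h1 : (⨅ a, f a) - B ≤ ⨅ a, g a := le_ciInf fun a => by
      have h2 : (⨅ a, f a) ≤ f a := ciInf_le bddf a
      have h3 := (abs_le.mp (h a)).2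
      linarith
    linarith
  · have h1 : (⨅ a, g a) - B ≤ ⨅ a, f a := le_ciInf fun a => by
      have h2 : (⨅ a, g a) ≤ g a := ciInf_le bddg a
      have h3 := (abs_le.mp (h a)).1
      linarith
    linarith

/-- Value-error bound via Bellman optimality operators of two finite MDPs sharing the
drift condition: `‖V⋆ − V̂⋆‖_w ≤ (1/(1−γκ)) ‖T⋆ V̂⋆ − T̂⋆ V̂⋆‖_w`. -/
theorem stmt5 (S A : Type*) [Fintype S] [Nonempty S] [Fintype A] [Nonempty A]
    (γ κ : ℝ) (hγ0 : 0 < γ) (hγ1 : γ < 1) (hκ : 0 < κ) (hγκ : γ * κ < 1)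
    (w : S → ℝ) (hw : ∀ s, 1 ≤ w s)
    (c ch : S → A → ℝ) (P Ph : S → A → S → ℝ)
    (hP0 : ∀ s a s', 0 ≤ P s a s') (hP1 : ∀ s a, ∑ s', P s a s' = 1)
    (hPh0 : ∀ s a s', 0 ≤ Ph s a s') (hPh1 : ∀ s a, ∑ s', Ph s a s' = 1)
    (hdrift : ∀ s a, ∑ s', w s' * P s a s' ≤ κ * w s)
    (hdrifth : ∀ s a, ∑ s', w s' * Ph s a s' ≤ κ * w s)
    (V Vh : S → ℝ)
    (hV : ∀ s, V s = ⨅ a, (c s a + γ * ∑ s', P s a s' * V s'))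
    (hVh : ∀ s, Vh s = ⨅ a, (ch s a + γ * ∑ s', Ph s a s' * Vh s')) :
    (⨆ s, |V s - Vh s| / w s) ≤ (1 / (1 - γ * κ)) *
      ⨆ s, |(⨅ a, (c s a + γ * ∑ s', P s a s' * Vh s')) -
             (⨅ a, (ch s a + γ * ∑ s', Ph s a s' * Vh s'))| / w s := by
  have hw0 : ∀ s, (0:ℝ) < w s := fun s => lt_of_lt_of_le one_pos (hw s)
  set M := ⨆ s, |V s - Vh s| / w s with hMdef
  set E := ⨆ s, |(⨅ a, (c s a + γ * ∑ s', P s a s' * Vh s')) -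
             (⨅ a, (ch s a + γ * ∑ s', Ph s a s' * Vh s'))| / w s with hEdef
  have bddM : BddAbove (Set.range fun s => |V s - Vh s| / w s) :=
    (Set.finite_range _).bddAbove
  have bddE : BddAbove (Set.range fun s => |(⨅ a, (c s a + γ * ∑ s', P s a s' * Vh s')) -
             (⨅ a, (ch s a + γ * ∑ s', Ph s a s' * Vh s'))| / w s) :=
    (Set.finite_range _).bddAbove
  have hM0 : 0 ≤ M := by
    obtain ⟨s⟩ := (inferInstance : Nonempty S)
    exact le_trans (div_nonneg (abs_nonneg _) (hw0 s).le) (le_ciSup bddM s)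
  have hMb : ∀ s, |V s - Vh s| ≤ M * w s := fun s => by
    have := le_ciSup bddM s
    rw [div_le_iff₀ (hw0 s)] at this
    exact this
  have hEb : ∀ s, |(⨅ a, (c s a + γ * ∑ s', P s a s' * Vh s')) -
             (⨅ a, (ch s a + γ * ∑ s', Ph s a s' * Vh s'))| ≤ E * w s := fun s => by
    have := le_ciSup bddE s
    rw [div_le_iff₀ (hw0 s)] at this
    exact this
  have key : ∀ s, |V s - Vh s| / w s ≤ γ * κ * M + E := by
    intro s
    rw [div_le_iff₀ (hw0 s)]
    have contr : |(⨅ a, (c s a + γ * ∑ s', P s a s' * V s')) -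
        (⨅ a, (c s a + γ * ∑ s', P s a s' * Vh s'))| ≤ γ * κ * M * w s := by
      apply inf_abs_le'
      intro a
      have heq : (c s a + γ * ∑ s', P s a s' * V s') - (c s a + γ * ∑ s', P s a s' * Vh s')
          = γ * ∑ s', P s a s' * (V s' - Vh s') := by
        simp only [Finset.mul_sum]
        have h : ∑ s', γ * (P s a s' * (V s' - Vh s')) =
            (∑ s', γ * (P s a s' * V s')) - ∑ s', γ * (P s a s' * Vh s') := by
          rw [← Finset.sum_sub_distrib]
          exact Finset.sum_congr rfl fun x _ => by ring
        rw [h]; ring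
      rw [heq, abs_mul, abs_of_pos hγ0]
      have h1 : |∑ s', P s a s' * (V s' - Vh s')| ≤ ∑ s', P s a s' * |V s' - Vh s'| := by
        refine le_trans (Finset.abs_sum_le_sum_abs _ _) ?_
        apply Finset.sum_le_sum
        intro x _
        rw [abs_mul, abs_of_nonneg (hP0 s a x)]
      have h2 : ∑ s', P s a s' * |V s' - Vh s'| ≤ ∑ s', P s a s' * (M * w s') := by
        apply Finset.sum_le_sum
        intro x _
        exact mul_le_mul_of_nonneg_left (hMb x) (hP0 s a x)
      have h3 : ∑ s', P s a s' * (M * w s') = M * ∑ s', w s' * P s a s' := by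
        rw [Finset.mul_sum]
        apply Finset.sum_congr rfl
        intro x _
        ring
      have h4 : M * ∑ s', w s' * P s a s' ≤ M * (κ * w s) :=
        mul_le_mul_of_nonneg_left (hdrift s a) hM0
      calc γ * |∑ s', P s a s' * (V s' - Vh s')|
          ≤ γ * (M * (κ * w s)) := by
            apply mul_le_mul_of_nonneg_left _ hγ0.le
            calc |∑ s', P s a s' * (V s' - Vh s')| ≤ ∑ s', P s a s' * |V s' - Vh s'| := h1
              _ ≤ ∑ s', P s a s' * (M * w s') := h2
              _ = M * ∑ s', w s' * P s a s' := h3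
              _ ≤ M * (κ * w s) := h4
        _ = γ * κ * M * w s := by ring
    have tri : |V s - Vh s| ≤ |(⨅ a, (c s a + γ * ∑ s', P s a s' * V s')) -
        (⨅ a, (c s a + γ * ∑ s', P s a s' * Vh s'))| +
        |(⨅ a, (c s a + γ * ∑ s', P s a s' * Vh s')) -
        (⨅ a, (ch s a + γ * ∑ s', Ph s a s' * Vh s'))| := by
      rw [hV s, hVh s]
      exact abs_sub_le _ _ _
    have := hEb s
    linarith [tri, contr, this]
  have hMle : M ≤ γ * κ * M + E := ciSup_le key
  have h1 : (0:ℝ) < 1 - γ * κ := by linarith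
  rw [div_mul_eq_mul_div, one_mul, le_div_iff₀ h1]
  nlinarith [hMle]
end

section
/- Main approximation theorem: under the setting of two finite MDPs with common state and action spaces, drift condition ∑_{s'} w(s')P(s'|s,a) ≤ κ w(s) (for both P and P̂) with γκ < 1, let π̂⋆ be an optimal deterministic policy of the approximate model with V̂⋆ = V̂^{π̂⋆}, let V^{π̂⋆} be the value of π̂⋆ in the true model, and let V⋆ be the true optimal value. Then ‖V^{π̂⋆} − V⋆‖_w ≤ (1/(1−γκ)) [ ‖T^{π̂⋆} V̂⋆ − T̂^{π̂⋆} V̂⋆‖_w + ‖T⋆ V̂⋆ − T̂⋆ V̂⋆‖_w ]. -/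
/-!
Both `V^{π̂⋆}` and `V⋆` are fixed points of Bellman operators of the true model, which are
`γκ`-Lipschitz in the weighted sup-norm `‖·‖_w` by the drift condition, while `V̂⋆` is a fixed point
of the corresponding operators `T̂^{π̂⋆}` and `T̂⋆` of the approximate model. If `T U = U`,
`T̂ Ũ = Ũ` and `T` is `L`-Lipschitz, then
`‖U - Ũ‖_w ≤ ‖T U - T Ũ‖_w + ‖T Ũ - T̂ Ũ‖_w ≤ L ‖U - Ũ‖_w + ‖T Ũ - T̂ Ũ‖_w`, so
`‖U - Ũ‖_w ≤ ‖T Ũ - T̂ Ũ‖_w / (1 - L)`. Applying this to both pairs of operators and using the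
triangle inequality through `V̂⋆` gives the bound.
-/

open Finset

lemma ciInf_le_ciInf_add {ι : Type*} [Finite ι] [Nonempty ι] {f g : ι → ℝ} {M : ℝ}
    (h : ∀ i, f i ≤ g i + M) : ⨅ i, f i ≤ (⨅ i, g i) + M := by
  obtain ⟨i, hi⟩ := exists_eq_ciInf_of_finite (f := g)
  calc ⨅ i, f i ≤ f i := ciInf_le (Set.finite_range f).bddBelow i
    _ ≤ (⨅ i, g i) + M := hi ▸ h i

lemma abs_ciInf_sub_ciInf_le {ι : Type*} [Finite ι] [Nonempty ι] {f g : ι → ℝ} {M : ℝ}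
    (h : ∀ i, |f i - g i| ≤ M) : |(⨅ i, f i) - ⨅ i, g i| ≤ M := by
  rw [abs_sub_le_iff, sub_le_iff_le_add', sub_le_iff_le_add']
  refine ⟨ciInf_le_ciInf_add fun i => ?_, ciInf_le_ciInf_add fun i => ?_⟩
  · linarith [(abs_sub_le_iff.mp (h i)).1]
  · linarith [(abs_sub_le_iff.mp (h i)).2]

section WeightedSupNorm

variable {S : Type*} {w : S → ℝ}

/-- The paper's `‖f‖_w`. -/
noncomputable def weightedSupNorm (w f : S → ℝ) : ℝ := ⨆ s, |f s| / w s

lemma weightedSupNorm_nonneg (hw : ∀ s, 0 ≤ w s) (f : S → ℝ) : 0 ≤ weightedSupNorm w f :=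
  Real.iSup_nonneg fun s => div_nonneg (abs_nonneg _) (hw s)

lemma abs_le_weightedSupNorm_mul [Finite S] (hw : ∀ s, 0 < w s) (f : S → ℝ) (s : S) :
    |f s| ≤ weightedSupNorm w f * w s :=
  (div_le_iff₀ (hw s)).mp <|
    le_ciSup (f := fun t => |f t| / w t) (Set.finite_range _).bddAbove s

lemma weightedSupNorm_le [Nonempty S] (hw : ∀ s, 0 < w s) {f : S → ℝ} {C : ℝ}
    (h : ∀ s, |f s| ≤ C * w s) : weightedSupNorm w f ≤ C :=
  ciSup_le fun s => (div_le_iff₀ (hw s)).mpr (h s)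

lemma weightedSupNorm_add_le [Finite S] [Nonempty S] (hw : ∀ s, 0 < w s) (f g : S → ℝ) :
    weightedSupNorm w (f + g) ≤ weightedSupNorm w f + weightedSupNorm w g :=
  weightedSupNorm_le hw fun s => calc
    |f s + g s| ≤ |f s| + |g s| := abs_add_le _ _
    _ ≤ weightedSupNorm w f * w s + weightedSupNorm w g * w s :=
      add_le_add (abs_le_weightedSupNorm_mul hw f s) (abs_le_weightedSupNorm_mul hw g s)
    _ = (weightedSupNorm w f + weightedSupNorm w g) * w s := by ring

lemma weightedSupNorm_sub_comm (f g : S → ℝ) :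
    weightedSupNorm w (f - g) = weightedSupNorm w (g - f) := by
  simp only [weightedSupNorm, Pi.sub_apply, abs_sub_comm]

lemma weightedSupNorm_sub_le [Finite S] [Nonempty S] (hw : ∀ s, 0 < w s) (f g h : S → ℝ) :
    weightedSupNorm w (f - h) ≤ weightedSupNorm w (f - g) + weightedSupNorm w (g - h) := by
  simpa only [sub_add_sub_cancel] using weightedSupNorm_add_le hw (f - g) (g - h)

lemma weightedSupNorm_sub_le_of_isFixedPt [Finite S] [Nonempty S] (hw : ∀ s, 0 < w s)
    {T T' : (S → ℝ) → S → ℝ} {L : ℝ} (hL : L < 1)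
    (hT : ∀ U U', weightedSupNorm w (T U - T U') ≤ L * weightedSupNorm w (U - U'))
    {U U' : S → ℝ} (hU : Function.IsFixedPt T U) (hU' : Function.IsFixedPt T' U') :
    weightedSupNorm w (U - U') ≤ weightedSupNorm w (T U' - T' U') / (1 - L) := by
  have hsplit : weightedSupNorm w (U - U') ≤
      L * weightedSupNorm w (U - U') + weightedSupNorm w (T U' - T' U') := by
    calc weightedSupNorm w (U - U') = weightedSupNorm w (T U - T' U') := by rw [hU, hU']
      _ ≤ weightedSupNorm w (T U - T U') + weightedSupNorm w (T U' - T' U') :=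
        weightedSupNorm_sub_le hw _ _ _
      _ ≤ L * weightedSupNorm w (U - U') + weightedSupNorm w (T U' - T' U') :=
        add_le_add_left (hT U U') _
  rw [le_div_iff₀ (sub_pos.mpr hL)]
  linarith

lemma abs_sum_mul_le_weightedSupNorm_mul [Fintype S] (hw : ∀ s, 0 < w s) {p : S → ℝ}
    (hp : ∀ s, 0 ≤ p s) {B : ℝ} (hB : ∑ s, w s * p s ≤ B) (f : S → ℝ) :
    |∑ s, p s * f s| ≤ weightedSupNorm w f * B := calc
  |∑ s, p s * f s| ≤ ∑ s, p s * |f s| := by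
      simpa only [abs_mul, abs_of_nonneg (hp _)] using abs_sum_le_sum_abs (fun s => p s * f s) univ
  _ ≤ ∑ s, p s * (weightedSupNorm w f * w s) :=
      sum_le_sum fun s _ => mul_le_mul_of_nonneg_left (abs_le_weightedSupNorm_mul hw f s) (hp s)
  _ = weightedSupNorm w f * ∑ s, w s * p s := by
      rw [mul_sum]; exact sum_congr rfl fun s _ => by ring
  _ ≤ weightedSupNorm w f * B :=
      mul_le_mul_of_nonneg_left hB (weightedSupNorm_nonneg (fun s => (hw s).le) f)

end WeightedSupNorm

section Bellman

variable {S A : Type*} [Fintype S] {w : S → ℝ} {c : S → A → ℝ} {P : S → A → S → ℝ} {γ κ : ℝ}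

noncomputable def qValue (c : S → A → ℝ) (P : S → A → S → ℝ) (γ : ℝ) (V : S → ℝ) (s : S)
    (a : A) : ℝ :=
  c s a + γ * ∑ s', P s a s' * V s'

/-- `T^π`. -/
noncomputable def policyBellman (c : S → A → ℝ) (P : S → A → S → ℝ) (γ : ℝ) (π : S → A)
    (V : S → ℝ) (s : S) : ℝ :=
  qValue c P γ V s (π s)

/-- `T⋆`; costs are minimised. -/
noncomputable def optimalBellman (c : S → A → ℝ) (P : S → A → S → ℝ) (γ : ℝ) (V : S → ℝ)
    (s : S) : ℝ :=
  ⨅ a, qValue c P γ V s a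

lemma abs_qValue_sub_qValue_le (hw : ∀ s, 0 < w s) (hγ : 0 ≤ γ)
    (hP : ∀ s a s', 0 ≤ P s a s') (hdrift : ∀ s a, ∑ s', w s' * P s a s' ≤ κ * w s)
    (U U' : S → ℝ) (s : S) (a : A) :
    |qValue c P γ U s a - qValue c P γ U' s a| ≤ γ * κ * weightedSupNorm w (U - U') * w s := by
  have hdiff : qValue c P γ U s a - qValue c P γ U' s a = γ * ∑ s', P s a s' * (U - U') s' := by
    simp only [qValue, Pi.sub_apply, mul_sub, sum_sub_distrib]
    ring
  rw [hdiff, abs_mul, abs_of_nonneg hγ]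
  calc γ * |∑ s', P s a s' * (U - U') s'| ≤ γ * (weightedSupNorm w (U - U') * (κ * w s)) :=
        mul_le_mul_of_nonneg_left
          (abs_sum_mul_le_weightedSupNorm_mul hw (hP s a) (hdrift s a) _) hγ
    _ = γ * κ * weightedSupNorm w (U - U') * w s := by ring

lemma policyBellman_lipschitz [Nonempty S] (hw : ∀ s, 0 < w s) (hγ : 0 ≤ γ)
    (hP : ∀ s a s', 0 ≤ P s a s') (hdrift : ∀ s a, ∑ s', w s' * P s a s' ≤ κ * w s)
    (π : S → A) (U U' : S → ℝ) :
    weightedSupNorm w (policyBellman c P γ π U - policyBellman c P γ π U') ≤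
      γ * κ * weightedSupNorm w (U - U') :=
  weightedSupNorm_le hw fun s => abs_qValue_sub_qValue_le hw hγ hP hdrift U U' s (π s)

lemma optimalBellman_lipschitz [Nonempty S] [Finite A] [Nonempty A] (hw : ∀ s, 0 < w s)
    (hγ : 0 ≤ γ) (hP : ∀ s a s', 0 ≤ P s a s')
    (hdrift : ∀ s a, ∑ s', w s' * P s a s' ≤ κ * w s) (U U' : S → ℝ) :
    weightedSupNorm w (optimalBellman c P γ U - optimalBellman c P γ U') ≤
      γ * κ * weightedSupNorm w (U - U') :=
  weightedSupNorm_le hw fun s =>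
    abs_ciInf_sub_ciInf_le fun a => abs_qValue_sub_qValue_le hw hγ hP hdrift U U' s a

end Bellman

theorem stmt6_general (S A : Type*) [Fintype S] [Nonempty S] [Fintype A] [Nonempty A]
    (γ κ : ℝ) (hγ0 : 0 < γ) (hγκ : γ * κ < 1)
    (w : S → ℝ) (hw : ∀ s, 1 ≤ w s)
    (c ch : S → A → ℝ) (P Ph : S → A → S → ℝ)
    (hP0 : ∀ s a s', 0 ≤ P s a s')
    (hdrift : ∀ s a, ∑ s', w s' * P s a s' ≤ κ * w s)
    (V Vh Vπh : S → ℝ) (πh : S → A)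
    -- V⋆ is the true optimal value function
    (hV : ∀ s, V s = ⨅ a, (c s a + γ * ∑ s', P s a s' * V s'))
    -- V̂⋆ is the approximate optimal value function
    (hVh : ∀ s, Vh s = ⨅ a, (ch s a + γ * ∑ s', Ph s a s' * Vh s'))
    -- π̂⋆ is greedy w.r.t. V̂⋆ in the approximate model: T̂^{π̂⋆} V̂⋆ = T̂⋆ V̂⋆
    (hgreedy : ∀ s, ch s (πh s) + γ * ∑ s', Ph s (πh s) s' * Vh s' =
      ⨅ a, (ch s a + γ * ∑ s', Ph s a s' * Vh s'))
    -- V^{π̂⋆} is the value of π̂⋆ in the true model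
    (hVπh : ∀ s, Vπh s = c s (πh s) + γ * ∑ s', P s (πh s) s' * Vπh s') :
    (⨆ s, |Vπh s - V s| / w s) ≤ (1 / (1 - γ * κ)) *
      ((⨆ s, |(c s (πh s) + γ * ∑ s', P s (πh s) s' * Vh s') -
              (ch s (πh s) + γ * ∑ s', Ph s (πh s) s' * Vh s')| / w s) +
       (⨆ s, |(⨅ a, (c s a + γ * ∑ s', P s a s' * Vh s')) -
              (⨅ a, (ch s a + γ * ∑ s', Ph s a s' * Vh s'))| / w s)) := by
  have hw0 : ∀ s, 0 < w s := fun s => one_pos.trans_le (hw s)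
  have hpolicy := weightedSupNorm_sub_le_of_isFixedPt hw0 hγκ
    (policyBellman_lipschitz hw0 hγ0.le hP0 hdrift πh)
    (show Function.IsFixedPt (policyBellman c P γ πh) Vπh from funext fun s => (hVπh s).symm)
    (show Function.IsFixedPt (policyBellman ch Ph γ πh) Vh from
      funext fun s => (hgreedy s).trans (hVh s).symm)
  have hoptimal := weightedSupNorm_sub_le_of_isFixedPt hw0 hγκ
    (optimalBellman_lipschitz hw0 hγ0.le hP0 hdrift)
    (show Function.IsFixedPt (optimalBellman c P γ) V from funext fun s => (hV s).symm)
    (show Function.IsFixedPt (optimalBellman ch Ph γ) Vh from funext fun s => (hVh s).symm)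
  calc weightedSupNorm w (Vπh - V)
      ≤ weightedSupNorm w (Vπh - Vh) + weightedSupNorm w (V - Vh) :=
        weightedSupNorm_sub_comm V Vh ▸ weightedSupNorm_sub_le hw0 Vπh Vh V
    _ ≤ _ / (1 - γ * κ) + _ / (1 - γ * κ) := add_le_add hpolicy hoptimal
    _ = 1 / (1 - γ * κ) *
        (weightedSupNorm w (policyBellman c P γ πh Vh - policyBellman ch Ph γ πh Vh) +
          weightedSupNorm w (optimalBellman c P γ Vh - optimalBellman ch Ph γ Vh)) := by ring

/-- Main approximation theorem: using the optimal policy `π̂⋆` of the approximate model in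
the true model loses at most
`(1/(1−γκ)) [ ‖T^{π̂⋆} V̂⋆ − T̂^{π̂⋆} V̂⋆‖_w + ‖T⋆ V̂⋆ − T̂⋆ V̂⋆‖_w ]`. -/
theorem stmt6 (S A : Type*) [Fintype S] [Nonempty S] [Fintype A] [Nonempty A]
    (γ κ : ℝ) (hγ0 : 0 < γ) (hγ1 : γ < 1) (hκ : 0 < κ) (hγκ : γ * κ < 1)
    (w : S → ℝ) (hw : ∀ s, 1 ≤ w s)
    (c ch : S → A → ℝ) (P Ph : S → A → S → ℝ)
    (hP0 : ∀ s a s', 0 ≤ P s a s') (hP1 : ∀ s a, ∑ s', P s a s' = 1)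
    (hPh0 : ∀ s a s', 0 ≤ Ph s a s') (hPh1 : ∀ s a, ∑ s', Ph s a s' = 1)
    (hdrift : ∀ s a, ∑ s', w s' * P s a s' ≤ κ * w s)
    (hdrifth : ∀ s a, ∑ s', w s' * Ph s a s' ≤ κ * w s)
    (V Vh Vπh : S → ℝ) (πh : S → A)
    -- V⋆ is the true optimal value function
    (hV : ∀ s, V s = ⨅ a, (c s a + γ * ∑ s', P s a s' * V s'))
    -- V̂⋆ is the approximate optimal value function
    (hVh : ∀ s, Vh s = ⨅ a, (ch s a + γ * ∑ s', Ph s a s' * Vh s'))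
    -- π̂⋆ is greedy w.r.t. V̂⋆ in the approximate model: T̂^{π̂⋆} V̂⋆ = T̂⋆ V̂⋆
    (hgreedy : ∀ s, ch s (πh s) + γ * ∑ s', Ph s (πh s) s' * Vh s' =
      ⨅ a, (ch s a + γ * ∑ s', Ph s a s' * Vh s'))
    -- V^{π̂⋆} is the value of π̂⋆ in the true model
    (hVπh : ∀ s, Vπh s = c s (πh s) + γ * ∑ s', P s (πh s) s' * Vπh s') :
    (⨆ s, |Vπh s - V s| / w s) ≤ (1 / (1 - γ * κ)) *
      ((⨆ s, |(c s (πh s) + γ * ∑ s', P s (πh s) s' * Vh s') -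
              (ch s (πh s) + γ * ∑ s', Ph s (πh s) s' * Vh s')| / w s) +
       (⨆ s, |(⨅ a, (c s a + γ * ∑ s', P s a s' * Vh s')) -
              (⨅ a, (ch s a + γ * ∑ s', Ph s a s' * Vh s'))| / w s)) :=
  stmt6_general S A γ κ hγ0 hγκ w hw c ch P Ph hP0 hdrift V Vh Vπh πh hV hVh hgreedy hVπh
end
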